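/- arXiv:2004.05152 — 6 statements merged into one kernel-verified Lean document; each statement's English description precedes it below -/
import Mathlib

section
/- Suppose P, Q, R are holomorphic functions on the upper half plane satisfying Ramanujan's system DP = (P^2 - Q)/12, DQ = (PQ - R)/3, DR = (PR - Q^2)/2 where D = (1/(2πi)) d/dτ, and suppose Q^3 - R^2 is nowhere zero. Define j = 12^3 · Q^3/(Q^3 - R^2). Then Dj/j = -R/Q, i.e. the logarithmic derivative of j equals -R/Q. -/
/-!
Since `DQ = (PQ - R)/3` and `DR = (PR - Q²)/2`, the discriminant `Δ = Q³ - R²` satisfies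
`DΔ = Q²(PQ - R) - R(PR - Q²) = P Δ`, while `D(Q³)/Q³ = P - R/Q`. The quasimodular `P` cancels in
`Dj/j = D(Q³)/Q³ - DΔ/Δ`.
-/

open Complex Filter Topology

section Ramanujan

variable {𝕜 : Type*} [NontriviallyNormedField 𝕜] [CharZero 𝕜] {P Q R : 𝕜 → 𝕜} {c x : 𝕜}

theorem hasDerivAt_cube_of_ramanujan (hQ : HasDerivAt Q (c * ((P x * Q x - R x) / 3)) x) :
    HasDerivAt (fun t => Q t ^ 3) (c * (P x * Q x - R x) * Q x ^ 2) x :=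
  (hQ.pow 3).congr_deriv (by push_cast; ring)

theorem hasDerivAt_discriminant_of_ramanujan
    (hQ : HasDerivAt Q (c * ((P x * Q x - R x) / 3)) x)
    (hR : HasDerivAt R (c * ((P x * R x - Q x ^ 2) / 2)) x) :
    HasDerivAt (fun t => Q t ^ 3 - R t ^ 2) (c * P x * (Q x ^ 3 - R x ^ 2)) x :=
  ((hasDerivAt_cube_of_ramanujan hQ).sub (hR.pow 2)).congr_deriv (by push_cast; ring)

theorem hasDerivAt_j_of_ramanujan
    (hQ : HasDerivAt Q (c * ((P x * Q x - R x) / 3)) x)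
    (hR : HasDerivAt R (c * ((P x * R x - Q x ^ 2) / 2)) x)
    (hQ0 : Q x ≠ 0) (hΔ : Q x ^ 3 - R x ^ 2 ≠ 0) :
    HasDerivAt (fun t => 1728 * Q t ^ 3 / (Q t ^ 3 - R t ^ 2))
      (c * -(R x / Q x) * (1728 * Q x ^ 3 / (Q x ^ 3 - R x ^ 2))) x := by
  refine (((hasDerivAt_cube_of_ramanujan hQ).const_mul 1728).div
    (hasDerivAt_discriminant_of_ramanujan hQ hR) hΔ).congr_deriv ?_
  field_simp
  ring

end Ramanujan

theorem ramanujan_logderiv_j_general (P Q R j : ℂ → ℂ)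
    (hQd : DifferentiableOn ℂ Q {z : ℂ | 0 < z.im})
    (hRd : DifferentiableOn ℂ R {z : ℂ | 0 < z.im})
    (hQ : ∀ τ : ℂ, 0 < τ.im →
      deriv Q τ = (2 * (Real.pi : ℂ) * I) * ((P τ * Q τ - R τ) / 3))
    (hR : ∀ τ : ℂ, 0 < τ.im →
      deriv R τ = (2 * (Real.pi : ℂ) * I) * ((P τ * R τ - Q τ ^ 2) / 2))
    (hQ0 : ∀ τ : ℂ, 0 < τ.im → Q τ ≠ 0)
    (hΔ : ∀ τ : ℂ, 0 < τ.im → Q τ ^ 3 - R τ ^ 2 ≠ 0)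
    (hj : ∀ τ : ℂ, 0 < τ.im →
      j τ = 1728 * Q τ ^ 3 / (Q τ ^ 3 - R τ ^ 2)) :
    ∀ τ : ℂ, 0 < τ.im →
      deriv j τ / (2 * (Real.pi : ℂ) * I) / j τ = -(R τ / Q τ) := by
  intro τ hτ
  have hH : {z : ℂ | 0 < z.im} ∈ 𝓝 τ :=
    (isOpen_lt continuous_const continuous_im).mem_nhds hτ
  have hQτ := hQ τ hτ ▸ ((hQd τ hτ).differentiableAt hH).hasDerivAt
  have hRτ := hR τ hτ ▸ ((hRd τ hτ).differentiableAt hH).hasDerivAt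
  have hjτ : HasDerivAt j _ τ :=
    (hasDerivAt_j_of_ramanujan hQτ hRτ (hQ0 τ hτ) (hΔ τ hτ)).congr_of_eventuallyEq
      (eventually_of_mem hH hj)
  have h2πi : 2 * (Real.pi : ℂ) * I ≠ 0 := by simp [Real.pi_ne_zero]
  have hj0 : j τ ≠ 0 := by
    rw [hj τ hτ]
    exact div_ne_zero (mul_ne_zero (by norm_num) (pow_ne_zero 3 (hQ0 τ hτ))) (hΔ τ hτ)
  rw [hjτ.deriv, ← hj τ hτ]
  field_simp

/-- Ramanujan's system implies `Dj/j = -R/Q` for `j = 1728 Q^3/(Q^3 - R^2)`. -/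
theorem ramanujan_logderiv_j (P Q R j : ℂ → ℂ)
    (hPd : DifferentiableOn ℂ P {z : ℂ | 0 < z.im})
    (hQd : DifferentiableOn ℂ Q {z : ℂ | 0 < z.im})
    (hRd : DifferentiableOn ℂ R {z : ℂ | 0 < z.im})
    (hP : ∀ τ : ℂ, 0 < τ.im →
      deriv P τ = (2 * (Real.pi : ℂ) * I) * ((P τ ^ 2 - Q τ) / 12))
    (hQ : ∀ τ : ℂ, 0 < τ.im →
      deriv Q τ = (2 * (Real.pi : ℂ) * I) * ((P τ * Q τ - R τ) / 3))
    (hR : ∀ τ : ℂ, 0 < τ.im →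
      deriv R τ = (2 * (Real.pi : ℂ) * I) * ((P τ * R τ - Q τ ^ 2) / 2))
    (hQ0 : ∀ τ : ℂ, 0 < τ.im → Q τ ≠ 0)
    (hΔ : ∀ τ : ℂ, 0 < τ.im → Q τ ^ 3 - R τ ^ 2 ≠ 0)
    (hj : ∀ τ : ℂ, 0 < τ.im →
      j τ = 1728 * Q τ ^ 3 / (Q τ ^ 3 - R τ ^ 2)) :
    ∀ τ : ℂ, 0 < τ.im →
      deriv j τ / (2 * (Real.pi : ℂ) * I) / j τ = -(R τ / Q τ) :=
  ramanujan_logderiv_j_general P Q R j hQd hRd hQ hR hQ0 hΔ hj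
end

section
/- Let j and λ be meromorphic functions related by j = 256·(λ^2 - λ + 1)^3/(λ^2(λ-1)^2). If j satisfies the Schwarzian equation {j,τ} + ((j^2 - 1968 j + 2654208)/(2 j^2 (j-1728)^2))(j')^2 = 0, then λ satisfies {λ,τ} + ((λ^2 - λ + 1)/(2λ^2(λ-1)^2))(λ')^2 = 0. -/
/-!
Put `F = jOfLambda`, so that `j = F ∘ λ` on the upper half-plane. The cocycle rule gives
`{j,τ} + qJ(j) j'² = ({F,z} + qJ(F) F'²)(λ) λ'² + {λ,τ}`, and the rational identity
`{F,z} + qJ(F(z)) F'(z)² = qLambda(z)` turns the equation for `j` into the one for `λ`.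
That identity is computed through `F(z) = jOfMu(z² - z)` with `jOfMu(w) = 256(w+1)³/w²`, whose
derivatives are short, and a second use of the cocycle rule.

All of this is valid where `F'(λ) ≠ 0`, i.e. away from the zeros of
`lambdaCritical(λ) = (2λ-1)(λ-2)(λ+1)(λ²-λ+1)`. This polynomial has simple roots and `λ' ≠ 0`,
so `lambdaCritical ∘ λ` has no double zeros and its zeros are isolated; the equation for `λ`
extends to them by continuity.
-/

open Complex Filter Topology

noncomputable section

def schwarzian (f : ℂ → ℂ) (z : ℂ) : ℂ :=
  deriv (deriv (deriv f)) z / deriv f z - 3 / 2 * (deriv (deriv f) z / deriv f z) ^ 2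

theorem Filter.EventuallyEq.schwarzian_eq {f g : ℂ → ℂ} {x : ℂ} (h : f =ᶠ[𝓝 x] g) :
    schwarzian f x = schwarzian g x := by
  simp only [schwarzian, h.deriv_eq, h.deriv.deriv_eq, h.deriv.deriv.deriv_eq]

theorem schwarzian_eq_of_hasDerivAt {f f₁ f₂ f₃ : ℂ → ℂ} {x : ℂ}
    (h₁ : ∀ᶠ y in 𝓝 x, HasDerivAt f (f₁ y) y) (h₂ : ∀ᶠ y in 𝓝 x, HasDerivAt f₁ (f₂ y) y)
    (h₃ : HasDerivAt f₂ (f₃ x) x) :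
    schwarzian f x = f₃ x / f₁ x - 3 / 2 * (f₂ x / f₁ x) ^ 2 := by
  have e₁ : deriv f =ᶠ[𝓝 x] f₁ := h₁.mono fun y hy => hy.deriv
  have e₂ : deriv (deriv f) =ᶠ[𝓝 x] f₂ := e₁.deriv.trans (h₂.mono fun y hy => hy.deriv)
  rw [schwarzian, e₂.deriv_eq, h₃.deriv, e₂.self_of_nhds, e₁.self_of_nhds]

theorem schwarzian_comp {F g : ℂ → ℂ} {x : ℂ} (hF : AnalyticAt ℂ F (g x))
    (hg : AnalyticAt ℂ g x) (hF' : deriv F (g x) ≠ 0) (hg' : deriv g x ≠ 0) :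
    schwarzian (F ∘ g) x = schwarzian F (g x) * deriv g x ^ 2 + schwarzian g x := by
  have hnear : ∀ᶠ y in 𝓝 x, AnalyticAt ℂ F (g y) ∧ AnalyticAt ℂ g y :=
    (hg.continuousAt.eventually hF.eventually_analyticAt).and hg.eventually_analyticAt
  have hd : ∀ {f : ℂ → ℂ} {y : ℂ}, AnalyticAt ℂ f y → HasDerivAt f (deriv f y) y :=
    fun h => h.differentiableAt.hasDerivAt
  rw [schwarzian_eq_of_hasDerivAt (f₁ := fun y => deriv F (g y) * deriv g y)
    (f₂ := fun y => deriv (deriv F) (g y) * deriv g y ^ 2 + deriv F (g y) * deriv (deriv g) y)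
    (f₃ := fun y => deriv (deriv (deriv F)) (g y) * deriv g y ^ 3
      + 3 * deriv (deriv F) (g y) * deriv g y * deriv (deriv g) y
      + deriv F (g y) * deriv (deriv (deriv g)) y)]
  · simp only [schwarzian]
    field_simp
    ring
  · exact hnear.mono fun y ⟨hFy, hgy⟩ => (hd hFy).comp y (hd hgy)
  · refine hnear.mono fun y ⟨hFy, hgy⟩ => ?_
    refine (((hd hFy.deriv).comp y (hd hgy)).mul (hd hgy.deriv)).congr_deriv ?_
    simp only [Function.comp_apply]
    ring
  · refine ((((hd hF.deriv.deriv).comp x (hd hg)).mul ((hd hg.deriv).pow 2)).add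
      (((hd hF.deriv).comp x (hd hg)).mul (hd hg.deriv.deriv))).congr_deriv ?_
    simp only [Function.comp_apply, Pi.pow_apply]
    ring

theorem continuousAt_schwarzian {f : ℂ → ℂ} {x : ℂ} (hf : AnalyticAt ℂ f x)
    (hf' : deriv f x ≠ 0) : ContinuousAt (schwarzian f) x := by
  have h₁ := hf.deriv.continuousAt
  have h₂ := hf.deriv.deriv.continuousAt
  have h₃ := hf.deriv.deriv.deriv.continuousAt
  exact (h₃.div h₁ hf').sub (continuousAt_const.mul ((h₂.div h₁ hf').pow 2))

theorem AnalyticAt.eventually_ne_zero_of_ne_zero_or_deriv_ne_zero {𝕜 E : Type*}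
    [NontriviallyNormedField 𝕜] [NormedAddCommGroup E] [NormedSpace 𝕜 E] {f : 𝕜 → E} {x : 𝕜}
    (hf : AnalyticAt 𝕜 f x) (h : f x ≠ 0 ∨ deriv f x ≠ 0) : ∀ᶠ y in 𝓝[≠] x, f y ≠ 0 := by
  refine hf.eventually_eq_zero_or_eventually_ne_zero.resolve_left fun hzero => ?_
  have hzero : f =ᶠ[𝓝 x] fun _ => 0 := hzero
  exact h.elim (· hzero.self_of_nhds) (· (hzero.deriv_eq.trans (deriv_const x 0)))

def jOfMu (w : ℂ) : ℂ := 256 * (w + 1) ^ 3 / w ^ 2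

theorem analyticAt_jOfMu {w : ℂ} (hw : w ≠ 0) : AnalyticAt ℂ jOfMu w := by
  unfold jOfMu
  fun_prop (disch := exact pow_ne_zero _ hw)

theorem hasDerivAt_jOfMu {w : ℂ} (hw : w ≠ 0) :
    HasDerivAt jOfMu (256 * (w + 1) ^ 2 * (w - 2) / w ^ 3) w := by
  refine ((((hasDerivAt_id w).add_const 1).pow 3).const_mul 256 |>.div
    ((hasDerivAt_id w).pow 2) (pow_ne_zero 2 hw)).congr_deriv ?_
  simp only [id, Pi.pow_apply]
  field_simp
  ring

theorem deriv_jOfMu_ne_zero {w : ℂ} (hw : w ≠ 0) (hw₁ : w + 1 ≠ 0) (hw₂ : w - 2 ≠ 0) :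
    deriv jOfMu w ≠ 0 := by
  rw [(hasDerivAt_jOfMu hw).deriv]
  exact div_ne_zero (mul_ne_zero (mul_ne_zero (by norm_num) (pow_ne_zero 2 hw₁)) hw₂)
    (pow_ne_zero 3 hw)

theorem schwarzian_jOfMu {w : ℂ} (hw : w ≠ 0) (hw₁ : w + 1 ≠ 0) (hw₂ : w - 2 ≠ 0) :
    schwarzian jOfMu w = -6 * (3 * w ^ 2 - 2 * w + 1) / (w ^ 2 * (w + 1) ^ 2 * (w - 2) ^ 2) := by
  have h₂ {y : ℂ} (hy : y ≠ 0) : HasDerivAt (fun w => 256 * (w + 1) ^ 2 * (w - 2) / w ^ 3)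
      (1536 * (y + 1) / y ^ 4) y := by
    refine (((((hasDerivAt_id y).add_const 1).pow 2).const_mul 256).mul
      ((hasDerivAt_id y).sub_const 2) |>.div ((hasDerivAt_id y).pow 3)
      (pow_ne_zero 3 hy)).congr_deriv ?_
    simp only [id, Pi.pow_apply, Pi.mul_apply]
    field_simp
    ring
  have h₃ : HasDerivAt (fun w => 1536 * (w + 1) / w ^ 4) (-1536 * (3 * w + 4) / w ^ 5) w := by
    refine ((((hasDerivAt_id w).add_const 1).const_mul 1536).div ((hasDerivAt_id w).pow 4)
      (pow_ne_zero 4 hw)).congr_deriv ?_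
    simp only [id, Pi.pow_apply]
    field_simp
    ring
  have hnear : ∀ᶠ y in 𝓝 w, y ≠ 0 := isOpen_ne.mem_nhds hw
  rw [schwarzian_eq_of_hasDerivAt (f₃ := fun w => -1536 * (3 * w + 4) / w ^ 5)
    (hnear.mono fun _ => hasDerivAt_jOfMu) (hnear.mono fun _ => h₂) h₃]
  field_simp
  ring

theorem hasDerivAt_sq_sub_self (z : ℂ) : HasDerivAt (fun z => z ^ 2 - z) (2 * z - 1) z :=
  ((hasDerivAt_pow 2 z).sub (hasDerivAt_id z)).congr_deriv (by simp)

theorem schwarzian_sq_sub_self (z : ℂ) :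
    schwarzian (fun z => z ^ 2 - z) z = -6 / (2 * z - 1) ^ 2 := by
  have h₂ (y : ℂ) : HasDerivAt (fun z => 2 * z - 1) 2 y :=
    (((hasDerivAt_id y).const_mul 2).sub_const 1).congr_deriv (by simp)
  rw [schwarzian_eq_of_hasDerivAt (f₂ := fun _ => 2) (f₃ := fun _ => 0)
    (.of_forall hasDerivAt_sq_sub_self) (.of_forall h₂) (hasDerivAt_const z 2), div_pow]
  ring

def jOfLambda (z : ℂ) : ℂ := 256 * (z ^ 2 - z + 1) ^ 3 / (z ^ 2 * (z - 1) ^ 2)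

def qJ (J : ℂ) : ℂ := (J ^ 2 - 1968 * J + 2654208) / (2 * J ^ 2 * (J - 1728) ^ 2)

def qLambda (z : ℂ) : ℂ := (z ^ 2 - z + 1) / (2 * z ^ 2 * (z - 1) ^ 2)

def lambdaCritical (z : ℂ) : ℂ := (2 * z - 1) * (z - 2) * (z + 1) * (z ^ 2 - z + 1)

theorem jOfLambda_eq_comp : jOfLambda = jOfMu ∘ fun z => z ^ 2 - z := by
  ext z
  simp only [jOfLambda, jOfMu, Function.comp_apply]
  ring

theorem jOfMu_sub_1728 {w : ℂ} (hw : w ≠ 0) :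
    jOfMu w - 1728 = 64 * (w - 2) ^ 2 * (4 * w + 1) / w ^ 2 := by
  unfold jOfMu
  field_simp
  ring

theorem analyticAt_jOfLambda {z : ℂ} (hz : z ^ 2 - z ≠ 0) : AnalyticAt ℂ jOfLambda z := by
  rw [jOfLambda_eq_comp]
  exact (analyticAt_jOfMu hz).comp (f := fun z => z ^ 2 - z) (by fun_prop)

theorem deriv_jOfLambda {z : ℂ} (hz : z ^ 2 - z ≠ 0) :
    deriv jOfLambda z = deriv jOfMu (z ^ 2 - z) * (2 * z - 1) := by
  rw [jOfLambda_eq_comp, deriv_comp (h := fun z => z ^ 2 - z) z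
    (analyticAt_jOfMu hz).differentiableAt (hasDerivAt_sq_sub_self z).differentiableAt,
    (hasDerivAt_sq_sub_self z).deriv]

theorem lambdaCritical_ne_zero_iff (z : ℂ) :
    lambdaCritical z ≠ 0 ↔ 2 * z - 1 ≠ 0 ∧ z ^ 2 - z + 1 ≠ 0 ∧ z ^ 2 - z - 2 ≠ 0 := by
  rw [show lambdaCritical z = (2 * z - 1) * ((z ^ 2 - z + 1) * (z ^ 2 - z - 2)) by
    unfold lambdaCritical; ring]
  simp only [mul_ne_zero_iff]

theorem deriv_jOfLambda_ne_zero {z : ℂ} (hz : z ^ 2 - z ≠ 0) (hcrit : lambdaCritical z ≠ 0) :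
    deriv jOfLambda z ≠ 0 := by
  obtain ⟨h2z, hw₁, hw₂⟩ := (lambdaCritical_ne_zero_iff z).mp hcrit
  rw [deriv_jOfLambda hz]
  exact mul_ne_zero (deriv_jOfMu_ne_zero hz hw₁ hw₂) h2z

theorem schwarzian_jOfLambda_add {z : ℂ} (hz : z ^ 2 - z ≠ 0) (hcrit : lambdaCritical z ≠ 0) :
    schwarzian jOfLambda z + qJ (jOfLambda z) * deriv jOfLambda z ^ 2 = qLambda z := by
  obtain ⟨h2z, hw₁, hw₂⟩ := (lambdaCritical_ne_zero_iff z).mp hcrit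
  have hsq : (2 * z - 1) ^ 2 = 4 * (z ^ 2 - z) + 1 := by ring
  have h4w : (z ^ 2 - z) * 4 + 1 ≠ 0 := by
    rw [mul_comm, ← hsq]
    exact pow_ne_zero 2 h2z
  have hv := hasDerivAt_sq_sub_self z
  rw [deriv_jOfLambda hz, jOfLambda_eq_comp,
    schwarzian_comp (g := fun z => z ^ 2 - z) (analyticAt_jOfMu hz) (by fun_prop)
      (deriv_jOfMu_ne_zero hz hw₁ hw₂) (hv.deriv ▸ h2z),
    hv.deriv, Function.comp_apply, schwarzian_jOfMu hz hw₁ hw₂, schwarzian_sq_sub_self,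
    (hasDerivAt_jOfMu hz).deriv, qJ, jOfMu_sub_1728 hz, qLambda,
    show 2 * z ^ 2 * (z - 1) ^ 2 = 2 * (z ^ 2 - z) ^ 2 by ring, mul_pow, hsq, jOfMu]
  generalize z ^ 2 - z = w at *
  field_simp
  ring

theorem schwarzian_comp_jOfLambda_add {l : ℂ → ℂ} {x : ℂ} (hl : AnalyticAt ℂ l x)
    (hl' : deriv l x ≠ 0) (hlx : l x ^ 2 - l x ≠ 0) (hcrit : lambdaCritical (l x) ≠ 0) :
    schwarzian (jOfLambda ∘ l) x + qJ (jOfLambda (l x)) * deriv (jOfLambda ∘ l) x ^ 2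
      = schwarzian l x + qLambda (l x) * deriv l x ^ 2 := by
  rw [schwarzian_comp (analyticAt_jOfLambda hlx) hl (deriv_jOfLambda_ne_zero hlx hcrit) hl',
    deriv_comp x (analyticAt_jOfLambda hlx).differentiableAt hl.differentiableAt]
  linear_combination deriv l x ^ 2 * schwarzian_jOfLambda_add hlx hcrit

theorem hasDerivAt_lambdaCritical (z : ℂ) :
    HasDerivAt lambdaCritical (10 * z ^ 4 - 20 * z ^ 3 + 6 * z ^ 2 + 4 * z - 5) z := by
  refine (((((hasDerivAt_id z).const_mul 2).sub_const 1).mul ((hasDerivAt_id z).sub_const 2)).mul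
    ((hasDerivAt_id z).add_const 1)).mul (((hasDerivAt_pow 2 z).sub (hasDerivAt_id z)).add_const 1)
    |>.congr_deriv ?_
  simp only [id, Pi.mul_apply, Pi.sub_apply]
  ring

theorem lambdaCritical_ne_zero_or_deriv_ne_zero (z : ℂ) :
    lambdaCritical z ≠ 0 ∨ deriv lambdaCritical z ≠ 0 := by
  rw [(hasDerivAt_lambdaCritical z).deriv, or_iff_not_imp_left, not_not]
  intro hz hz'
  unfold lambdaCritical at hz
  -- Bezout identity for `lambdaCritical` and its derivative
  refine one_ne_zero (α := ℂ) ?_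
  linear_combination (-106/243 + (8/27) * z + (140/81) * z ^ 2 - (280/243) * z ^ 3) * hz
    + (-91/243 + (62/243) * z - (2/81) * z ^ 2 - (112/243) * z ^ 3 + (56/243) * z ^ 4) * hz'

theorem eventually_lambdaCritical_comp_ne_zero {l : ℂ → ℂ} {x : ℂ} (hl : AnalyticAt ℂ l x)
    (hl' : deriv l x ≠ 0) : ∀ᶠ y in 𝓝[≠] x, lambdaCritical (l y) ≠ 0 := by
  have hcomp : AnalyticAt ℂ (lambdaCritical ∘ l) x := by
    unfold lambdaCritical; fun_prop
  refine hcomp.eventually_ne_zero_of_ne_zero_or_deriv_ne_zero ?_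
  rw [deriv_comp x (by unfold lambdaCritical; fun_prop) hl.differentiableAt]
  exact (lambdaCritical_ne_zero_or_deriv_ne_zero (l x)).imp id fun h => mul_ne_zero h hl'

theorem continuousAt_schwarzian_add_qLambda {l : ℂ → ℂ} {x : ℂ} (hl : AnalyticAt ℂ l x)
    (hl' : deriv l x ≠ 0) (hl₀ : l x ≠ 0) (hl₁ : l x - 1 ≠ 0) :
    ContinuousAt (fun y => schwarzian l y + qLambda (l y) * deriv l y ^ 2) x := by
  have hden : 2 * l x ^ 2 * (l x - 1) ^ 2 ≠ 0 :=
    mul_ne_zero (mul_ne_zero two_ne_zero (pow_ne_zero 2 hl₀)) (pow_ne_zero 2 hl₁)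
  have hq : ContinuousAt (fun y => qLambda (l y)) x := by
    unfold qLambda
    fun_prop (disch := exact hden)
  exact (continuousAt_schwarzian hl hl').add (hq.mul (hl.deriv.continuousAt.pow 2))

end

/-- If `j = 256 (λ² - λ + 1)³ / (λ²(λ-1)²)` satisfies the Schwarzian equation for `j`,
then `λ` satisfies the Schwarzian equation `{λ,τ} + ((λ²-λ+1)/(2λ²(λ-1)²)) (λ')² = 0`. -/
theorem schwarzian_equation_lambda (l j : ℂ → ℂ)
    (hla : ∀ τ : ℂ, 0 < τ.im → AnalyticAt ℂ l τ)
    (hl0 : ∀ τ : ℂ, 0 < τ.im → l τ ≠ 0)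
    (hl1 : ∀ τ : ℂ, 0 < τ.im → l τ - 1 ≠ 0)
    (hl' : ∀ τ : ℂ, 0 < τ.im → deriv l τ ≠ 0)
    (hj : ∀ τ : ℂ, 0 < τ.im →
      j τ = 256 * (l τ ^ 2 - l τ + 1) ^ 3 / (l τ ^ 2 * (l τ - 1) ^ 2))
    (hSj : ∀ τ : ℂ, 0 < τ.im →
      (deriv (deriv (deriv j)) τ / deriv j τ
          - (3 / 2) * (deriv (deriv j) τ / deriv j τ) ^ 2)
        + (j τ ^ 2 - 1968 * j τ + 2654208)
            / (2 * j τ ^ 2 * (j τ - 1728) ^ 2) * (deriv j τ) ^ 2 = 0) :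
    ∀ τ : ℂ, 0 < τ.im →
      (deriv (deriv (deriv l)) τ / deriv l τ
          - (3 / 2) * (deriv (deriv l) τ / deriv l τ) ^ 2)
        + (l τ ^ 2 - l τ + 1) / (2 * l τ ^ 2 * (l τ - 1) ^ 2) * (deriv l τ) ^ 2 = 0 := by
  have hH : IsOpen {τ : ℂ | 0 < τ.im} := isOpen_lt continuous_const continuous_im
  have hl2 (x : ℂ) (hx : 0 < x.im) : l x ^ 2 - l x ≠ 0 := by
    rw [sq, ← mul_sub_one]
    exact mul_ne_zero (hl0 x hx) (hl1 x hx)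
  have hgeneric (x : ℂ) (hx : 0 < x.im) (hcrit : lambdaCritical (l x) ≠ 0) :
      schwarzian l x + qLambda (l x) * deriv l x ^ 2 = 0 := by
    have hjx : j =ᶠ[𝓝 x] jOfLambda ∘ l := Filter.mem_of_superset (hH.mem_nhds hx) hj
    rw [← schwarzian_comp_jOfLambda_add (hla x hx) (hl' x hx) (hl2 x hx) hcrit,
      ← hjx.schwarzian_eq, ← hjx.deriv_eq, show jOfLambda (l x) = j x from (hj x hx).symm]
    exact hSj x hx
  intro τ hτ
  have hcont := continuousAt_schwarzian_add_qLambda (hla τ hτ) (hl' τ hτ) (hl0 τ hτ) (hl1 τ hτ)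
  have hpunct : (fun x => schwarzian l x + qLambda (l x) * deriv l x ^ 2) =ᶠ[𝓝[≠] τ] 0 := by
    filter_upwards [eventually_lambdaCritical_comp_ne_zero (hla τ hτ) (hl' τ hτ),
      eventually_nhdsWithin_of_eventually_nhds (hH.mem_nhds hτ)] with x hcrit hx
    exact hgeneric x hx hcrit
  exact tendsto_nhds_unique (hcont.tendsto.mono_left nhdsWithin_le_nhds)
    (tendsto_const_nhds.congr' hpunct.symm)
end

section
/- As an identity of rational functions in x: with j(x) = 27(1+8x)^3/(x(1-x)^3), the formal Schwarzian derivative {j, x} plus (j^2 - 1968 j + 2654208)/(2 j^2 (j-1728)^2)·(dj/dx)^2 equals -(8x^2 - 8x + 9)/(18 x^2 (x-1)^2) + (8x^2-8x+9)/(9x^2(x-1)^2). Equivalently: {j,x}·1 + ((j^2-1968j+2654208)/(2j^2(j-1728)^2))(dj/dx)^2 = (8x^2 - 8x + 9)/(18 x^2 (x-1)^2). -/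
/-!
Away from `0` and `1`, `j` has the partial fraction expansion
`27/x + 13851/(1-x) - 32805/(1-x)² + 19683/(1-x)³`, and expressions of this shape are closed
under differentiation (each term just shifts its pole order), so `j'`, `j''`, `j'''` are explicit.
Clearing the denominators `j'`, `j`, `j - 1728` leaves a rational identity in `x` whose only
denominators are powers of `x` and `1 - x`.
-/

open Set

theorem HasDerivAt.const_div_pow_succ {𝕜 : Type*} [NontriviallyNormedField 𝕜] {g : 𝕜 → 𝕜}
    {g' x : 𝕜} (hg : HasDerivAt g g' x) (hx : g x ≠ 0) (e : 𝕜) (m : ℕ) :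
    HasDerivAt (fun y => e / g y ^ (m + 1)) (-(m + 1) * e * g' / g x ^ (m + 2)) x := by
  refine ((hasDerivAt_const x e).fun_div (hg.fun_pow (m + 1)) (pow_ne_zero _ hx)).congr_deriv ?_
  rw [Nat.add_sub_cancel]
  push_cast
  field_simp
  ring

noncomputable def partialFrac (n : ℕ) (a b c d x : ℂ) : ℂ :=
  a / x ^ (n + 1) + b / (1 - x) ^ (n + 1) + c / (1 - x) ^ (n + 2) + d / (1 - x) ^ (n + 3)

theorem hasDerivAt_partialFrac (n : ℕ) (a b c d : ℂ) {x : ℂ} (hx₀ : x ≠ 0) (hx₁ : x ≠ 1) :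
    HasDerivAt (partialFrac n a b c d)
      (partialFrac (n + 1) (-(n + 1) * a) ((n + 1) * b) ((n + 2) * c) ((n + 3) * d) x) x := by
  have hsub : HasDerivAt (fun y : ℂ => 1 - y) (-1) x := by
    simpa using (hasDerivAt_id x).const_sub 1
  have h1x : 1 - x ≠ 0 := sub_ne_zero.mpr hx₁.symm
  refine ((((hasDerivAt_id x).const_div_pow_succ hx₀ a n).fun_add
    (hsub.const_div_pow_succ h1x b n)).fun_add (hsub.const_div_pow_succ h1x c (n + 1))).fun_add
    (hsub.const_div_pow_succ h1x d (n + 2)) |>.congr_deriv ?_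
  simp only [partialFrac, id]
  push_cast
  ring

theorem isOpen_ne_zero_ne_one : IsOpen {x : ℂ | x ≠ 0 ∧ x ≠ 1} :=
  isOpen_ne.inter isOpen_ne

theorem Set.EqOn.deriv_partialFrac {f : ℂ → ℂ} {n : ℕ} {a b c d : ℂ}
    (hf : EqOn f (partialFrac n a b c d) {x | x ≠ 0 ∧ x ≠ 1}) :
    EqOn (_root_.deriv f)
      (partialFrac (n + 1) (-(n + 1) * a) ((n + 1) * b) ((n + 2) * c) ((n + 3) * d))
      {x | x ≠ 0 ∧ x ≠ 1} := fun _ hx =>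
  (hf.deriv isOpen_ne_zero_ne_one hx).trans (hasDerivAt_partialFrac n a b c d hx.1 hx.2).deriv

theorem div_sub_div_sq_add_eq_of_mul_eq {K : Type*} [Field K] {u v w c d r : K}
    (hu : u ≠ 0) (hd : d ≠ 0) (h2 : (2 : K) ≠ 0)
    (h : (2 * w * u - 3 * v ^ 2) * d + 2 * c * u ^ 4 = 2 * r * u ^ 2 * d) :
    w / u - 3 / 2 * (v / u) ^ 2 + c / d * u ^ 2 = r := by
  field_simp
  linear_combination h

theorem div_eq_partialFrac {x : ℂ} (hx₀ : x ≠ 0) (hx₁ : x ≠ 1) :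
    27 * (1 + 8 * x) ^ 3 / (x * (1 - x) ^ 3) = partialFrac 0 27 13851 (-32805) 19683 x := by
  have h1x : 1 - x ≠ 0 := sub_ne_zero.mpr hx₁.symm
  rw [partialFrac]
  field_simp
  ring

/-- Rational-function identity: for `j(x) = 27(1+8x)³/(x(1-x)³)`, the formal Schwarzian
`{j,x}` plus `((j²-1968j+2654208)/(2j²(j-1728)²))(dj/dx)²` equals
`(8x²-8x+9)/(18x²(x-1)²)`. -/
theorem schwarzian_j_x_identity_level3
    (j : ℂ → ℂ)
    (hj : ∀ x : ℂ, j x = 27 * (1 + 8 * x) ^ 3 / (x * (1 - x) ^ 3)) :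
    ∀ x : ℂ, x ≠ 0 → x ≠ 1 → deriv j x ≠ 0 → j x ≠ 0 → j x ≠ 1728 →
      (deriv (deriv (deriv j)) x / deriv j x
          - (3 / 2) * (deriv (deriv j) x / deriv j x) ^ 2)
        + (j x ^ 2 - 1968 * j x + 2654208)
            / (2 * j x ^ 2 * (j x - 1728) ^ 2) * (deriv j x) ^ 2
      = (8 * x ^ 2 - 8 * x + 9) / (18 * x ^ 2 * (x - 1) ^ 2) := by
  intro x hx₀ hx₁ hj₁ hj₀ hj₁₇₂₈
  have hj_eqOn : EqOn j (partialFrac 0 27 13851 (-32805) 19683) {x | x ≠ 0 ∧ x ≠ 1} :=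
    fun y hy => (hj y).trans (div_eq_partialFrac hy.1 hy.2)
  have h₁ := hj_eqOn.deriv_partialFrac
  have h₂ := h₁.deriv_partialFrac
  have h₃ := h₂.deriv_partialFrac
  have hd : 2 * j x ^ 2 * (j x - 1728) ^ 2 ≠ 0 :=
    mul_ne_zero (mul_ne_zero two_ne_zero (pow_ne_zero 2 hj₀))
      (pow_ne_zero 2 (sub_ne_zero.mpr hj₁₇₂₈))
  refine div_sub_div_sq_add_eq_of_mul_eq hj₁ hd two_ne_zero ?_
  have hx : x ∈ {x : ℂ | x ≠ 0 ∧ x ≠ 1} := ⟨hx₀, hx₁⟩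
  have h1x : 1 - x ≠ 0 := sub_ne_zero.mpr hx₁.symm
  rw [h₁ hx, h₂ hx, h₃ hx, hj x]
  simp only [partialFrac]
  push_cast
  field_simp
  ring
end

section
/- Suppose P, Q, R satisfy the level-6 system DP = (27P^3 - 36P^2Q + 5PQ^2 + 4PR)/48, DQ = (-27P^2Q + 24PQ^2 - Q^3 + 4QR)/48, DR = (-729P^4 + 972P^3Q - 270P^2Q^2 + 12PQ^3 - Q^4 + 16R^2)/192. Let f = P/Q and regard P as a function of f. Then P''(f) + (-1/f + 1/(f-1) + 1/(f-1/9))·P'(f) - ((f - 1/3)/(3f^2(f-1)(f-1/9)))·P(f) = 0. -/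
/-!
Where `P` and `Q` are differentiable, the system gives `f' = (c/8) g Q²` with
`g = f (9f - 1) (f - 1)`. The real work is to show that `P, Q, R` are holomorphic. Off the
zeros of `g` this is forced, since the junk value `deriv = 0` of a non-differentiable `P` or `Q`
would make `P / Q` a root of the cubic. At a zero of `g` the zero is simple (`f' ≠ 0` and the
cubic has simple roots), yet `(8/c) f' g = (g Q)²` is the square of a function holomorphic on a
punctured disc and continuous at its centre, hence holomorphic, so it vanishes to even order.
Once `P, Q, R` are holomorphic, `dP/df` is an explicit rational function of `f, Q, R` and the
equation is an identity of rational functions.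
-/

open Complex Filter Topology

theorem Complex.deriv_eq_zero_of_eventuallyEq_sq {w h : ℂ → ℂ} {z : ℂ}
    (hw : ∀ᶠ σ in 𝓝[≠] z, DifferentiableAt ℂ w σ) (hsq : (fun σ => w σ ^ 2) =ᶠ[𝓝 z] h)
    (hh : ContinuousAt h z) (hz : h z = 0) : deriv h z = 0 := by
  have hwz : w z = 0 := pow_eq_zero_iff two_ne_zero |>.mp (hsq.eq_of_nhds.trans hz)
  have hwc : ContinuousAt w z := by
    have hnorm : Tendsto (fun σ => √‖h σ‖) (𝓝 z) (𝓝 0) := by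
      simpa [hz] using hh.norm.sqrt.tendsto
    rw [ContinuousAt, hwz, tendsto_zero_iff_norm_tendsto_zero]
    refine hnorm.congr' (hsq.mono fun σ hσ => ?_)
    rw [← hσ, norm_pow, Real.sqrt_sq (norm_nonneg _)]
  have hwd : DifferentiableAt ℂ w z :=
    (analyticAt_of_differentiable_on_punctured_nhds_of_continuousAt hw hwc).differentiableAt
  rw [← hsq.deriv_eq, deriv_fun_pow hwd, hwz]
  simp

noncomputable def level6P (p q r : ℂ) : ℂ :=
  (27 * p ^ 3 - 36 * p ^ 2 * q + 5 * p * q ^ 2 + 4 * p * r) / 48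

noncomputable def level6Q (p q r : ℂ) : ℂ :=
  (-27 * p ^ 2 * q + 24 * p * q ^ 2 - q ^ 3 + 4 * q * r) / 48

noncomputable def level6R (p q r : ℂ) : ℂ :=
  (-729 * p ^ 4 + 972 * p ^ 3 * q - 270 * p ^ 2 * q ^ 2 + 12 * p * q ^ 3 - q ^ 4 + 16 * r ^ 2) / 192

noncomputable def level6Cubic (x : ℂ) : ℂ := x * (9 * x - 1) * (x - 1)

theorem mul_level6P_sub_mul_level6Q (p r : ℂ) {q : ℂ} (hq : q ≠ 0) :
    q * level6P p q r - p * level6Q p q r = level6Cubic (p / q) * q ^ 4 / 8 := by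
  unfold level6P level6Q level6Cubic
  field_simp
  ring

theorem hasDerivAt_level6Cubic (x : ℂ) : HasDerivAt level6Cubic (27 * x ^ 2 - 20 * x + 1) x := by
  have h := ((hasDerivAt_id' x).fun_mul (((hasDerivAt_id' x).const_mul 9).sub_const 1)).fun_mul
    ((hasDerivAt_id' x).sub_const 1)
  exact h.congr_deriv (by ring)

theorem level6Cubic_deriv_ne_zero_of_eq_zero {x : ℂ} (hx : level6Cubic x = 0) :
    27 * x ^ 2 - 20 * x + 1 ≠ 0 := by
  unfold level6Cubic at hx
  rcases mul_eq_zero.mp hx with hx | hx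
  · rcases mul_eq_zero.mp hx with hx | hx
    · simp [hx]
    · rw [show x = 1 / 9 by linear_combination hx / 9]; norm_num
  · rw [show x = 1 by linear_combination hx]; norm_num

theorem level6Cubic_ne_zero_iff {x : ℂ} :
    level6Cubic x ≠ 0 ↔ x ≠ 0 ∧ 9 * x - 1 ≠ 0 ∧ x - 1 ≠ 0 := by
  simp [level6Cubic, and_assoc]

structure Level6Setting (c : ℂ) (U : Set ℂ) (P Q R f : ℂ → ℂ) : Prop where
  isOpen : IsOpen U
  c_ne_zero : c ≠ 0
  deriv_P : ∀ τ ∈ U, deriv P τ = c * level6P (P τ) (Q τ) (R τ)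
  deriv_Q : ∀ τ ∈ U, deriv Q τ = c * level6Q (P τ) (Q τ) (R τ)
  deriv_R : ∀ τ ∈ U, deriv R τ = c * level6R (P τ) (Q τ) (R τ)
  Q_ne_zero : ∀ τ ∈ U, Q τ ≠ 0
  f_eq : ∀ τ ∈ U, f τ = P τ / Q τ
  deriv_f_ne_zero : ∀ τ ∈ U, deriv f τ ≠ 0

namespace Level6Setting

variable {c : ℂ} {U : Set ℂ} {P Q R f : ℂ → ℂ} {τ : ℂ}

theorem P_eq (h : Level6Setting c U P Q R f) (hτ : τ ∈ U) : P τ = f τ * Q τ := by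
  rw [h.f_eq τ hτ, div_mul_cancel₀ _ (h.Q_ne_zero τ hτ)]

theorem differentiableAt_f (h : Level6Setting c U P Q R f) (hτ : τ ∈ U) :
    DifferentiableAt ℂ f τ :=
  differentiableAt_of_deriv_ne_zero (h.deriv_f_ne_zero τ hτ)

theorem differentiableAt_deriv_f (h : Level6Setting c U P Q R f) (hτ : τ ∈ U) :
    DifferentiableAt ℂ (deriv f) τ :=
  have hf : DifferentiableOn ℂ f U := fun _ hσ => (h.differentiableAt_f hσ).differentiableWithinAt
  (hf.deriv h.isOpen τ hτ).differentiableAt (h.isOpen.mem_nhds hτ)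

theorem hasDerivAt_level6Cubic_f (h : Level6Setting c U P Q R f) (hτ : τ ∈ U) :
    HasDerivAt (fun σ => level6Cubic (f σ)) ((27 * f τ ^ 2 - 20 * f τ + 1) * deriv f τ) τ :=
  (hasDerivAt_level6Cubic (f τ)).comp τ (h.differentiableAt_f hτ).hasDerivAt

theorem differentiableAt_P_of_differentiableAt_Q (h : Level6Setting c U P Q R f) (hτ : τ ∈ U)
    (hQ : DifferentiableAt ℂ Q τ) : DifferentiableAt ℂ P τ := by
  have hP : (fun σ => f σ * Q σ) =ᶠ[𝓝 τ] P :=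
    eventually_of_mem (h.isOpen.mem_nhds hτ) fun σ hσ => (h.P_eq hσ).symm
  exact hP.differentiableAt_iff.mp ((h.differentiableAt_f hτ).mul hQ)

theorem differentiableAt_Q_of_level6Cubic_ne_zero (h : Level6Setting c U P Q R f) (hτ : τ ∈ U)
    (hf : level6Cubic (f τ) ≠ 0) : DifferentiableAt ℂ Q τ := by
  by_contra hQ
  have hQ' : level6Q (P τ) (Q τ) (R τ) = 0 := by
    simpa [h.c_ne_zero, deriv_zero_of_not_differentiableAt hQ] using (h.deriv_Q τ hτ).symm
  by_cases hP : DifferentiableAt ℂ P τ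
  · have hf0 : f τ ≠ 0 := (level6Cubic_ne_zero_iff.mp hf).1
    have hQ_eq : (fun σ => P σ / f σ) =ᶠ[𝓝 τ] Q := by
      filter_upwards [h.isOpen.mem_nhds hτ,
        (h.differentiableAt_f hτ).continuousAt.eventually_ne hf0] with σ hσ hfσ
      rw [h.f_eq σ hσ] at hfσ ⊢
      exact div_div_cancel₀ (div_ne_zero_iff.mp hfσ).1
    exact hQ (hQ_eq.differentiableAt_iff.mp (hP.div (h.differentiableAt_f hτ) hf0))
  · have hP' : level6P (P τ) (Q τ) (R τ) = 0 := by
      simpa [h.c_ne_zero, deriv_zero_of_not_differentiableAt hP] using (h.deriv_P τ hτ).symm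
    have hcubic := mul_level6P_sub_mul_level6Q (P τ) (R τ) (h.Q_ne_zero τ hτ)
    rw [hP', hQ', mul_zero, mul_zero, sub_zero, ← h.f_eq τ hτ, eq_comm] at hcubic
    exact hf (by simpa [h.Q_ne_zero τ hτ] using hcubic)

theorem deriv_f_eq_of_differentiableAt_Q (h : Level6Setting c U P Q R f) (hτ : τ ∈ U)
    (hQ : DifferentiableAt ℂ Q τ) : deriv f τ = c / 8 * level6Cubic (f τ) * Q τ ^ 2 := by
  have hq := h.Q_ne_zero τ hτ
  have hf : f =ᶠ[𝓝 τ] fun σ => P σ / Q σ :=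
    eventually_of_mem (h.isOpen.mem_nhds hτ) h.f_eq
  rw [hf.deriv_eq, deriv_fun_div (h.differentiableAt_P_of_differentiableAt_Q hτ hQ) hQ hq,
    h.deriv_P τ hτ, h.deriv_Q τ hτ, h.f_eq τ hτ, div_eq_iff (pow_ne_zero 2 hq)]
  linear_combination c * mul_level6P_sub_mul_level6Q (P τ) (R τ) hq

theorem level6Cubic_f_ne_zero (h : Level6Setting c U P Q R f) (hτ : τ ∈ U) :
    level6Cubic (f τ) ≠ 0 := by
  intro hg
  have hg' : (27 * f τ ^ 2 - 20 * f τ + 1) * deriv f τ ≠ 0 :=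
    mul_ne_zero (level6Cubic_deriv_ne_zero_of_eq_zero hg) (h.deriv_f_ne_zero τ hτ)
  have hpunct : ∀ᶠ σ in 𝓝[≠] τ, σ ∈ U ∧ DifferentiableAt ℂ Q σ := by
    filter_upwards [mem_nhdsWithin_of_mem_nhds (h.isOpen.mem_nhds hτ),
      (h.hasDerivAt_level6Cubic_f hτ).eventually_ne hg'] with σ hσ hgσ
    exact ⟨hσ, h.differentiableAt_Q_of_level6Cubic_ne_zero hσ hgσ⟩
  have hsq : (fun σ => (level6Cubic (f σ) * Q σ) ^ 2) =ᶠ[𝓝 τ]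
      fun σ => 8 / c * (deriv f σ * level6Cubic (f σ)) := by
    filter_upwards [eventually_nhdsWithin_iff.mp hpunct] with σ hσ
    rcases eq_or_ne σ τ with rfl | hne
    · simp [hg]
    · rw [h.deriv_f_eq_of_differentiableAt_Q (hσ hne).1 (hσ hne).2]
      field_simp [h.c_ne_zero]
  have hd := ((h.differentiableAt_deriv_f hτ).hasDerivAt.fun_mul
    (h.hasDerivAt_level6Cubic_f hτ)).const_mul (8 / c)
  have hzero := deriv_eq_zero_of_eventuallyEq_sq
    (hpunct.mono fun σ hσ => (h.hasDerivAt_level6Cubic_f hσ.1).differentiableAt.mul hσ.2)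
    hsq hd.continuousAt (by simp [hg])
  rw [hd.deriv, hg] at hzero
  simp [h.c_ne_zero, h.deriv_f_ne_zero τ hτ, level6Cubic_deriv_ne_zero_of_eq_zero hg] at hzero

theorem differentiableAt_Q (h : Level6Setting c U P Q R f) (hτ : τ ∈ U) :
    DifferentiableAt ℂ Q τ :=
  h.differentiableAt_Q_of_level6Cubic_ne_zero hτ (h.level6Cubic_f_ne_zero hτ)

theorem differentiableAt_P (h : Level6Setting c U P Q R f) (hτ : τ ∈ U) :
    DifferentiableAt ℂ P τ :=
  h.differentiableAt_P_of_differentiableAt_Q hτ (h.differentiableAt_Q hτ)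

theorem differentiableAt_R (h : Level6Setting c U P Q R f) (hτ : τ ∈ U) :
    DifferentiableAt ℂ R τ := by
  have hR : (fun σ => 12 * (deriv Q σ / c - level6Q (P σ) (Q σ) 0) / Q σ) =ᶠ[𝓝 τ] R := by
    filter_upwards [h.isOpen.mem_nhds hτ] with σ hσ
    rw [h.deriv_Q σ hσ]
    unfold level6Q
    field_simp [h.c_ne_zero, h.Q_ne_zero σ hσ]
    ring
  have hQ : DifferentiableOn ℂ Q U := fun _ hσ => (h.differentiableAt_Q hσ).differentiableWithinAt
  have hdQ := (hQ.deriv h.isOpen τ hτ).differentiableAt (h.isOpen.mem_nhds hτ)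
  have hPτ := h.differentiableAt_P hτ
  have hQτ := h.differentiableAt_Q hτ
  refine hR.differentiableAt_iff.mp (DifferentiableAt.div ?_ hQτ (h.Q_ne_zero τ hτ))
  unfold level6Q
  fun_prop

theorem hasDerivAt_f (h : Level6Setting c U P Q R f) (hτ : τ ∈ U) :
    HasDerivAt f (c / 8 * level6Cubic (f τ) * Q τ ^ 2) τ := by
  rw [← h.deriv_f_eq_of_differentiableAt_Q hτ (h.differentiableAt_Q hτ)]
  exact (h.differentiableAt_f hτ).hasDerivAt

theorem hasDerivAt_Q (h : Level6Setting c U P Q R f) (hτ : τ ∈ U) :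
    HasDerivAt Q (c * level6Q (P τ) (Q τ) (R τ)) τ :=
  h.deriv_Q τ hτ ▸ (h.differentiableAt_Q hτ).hasDerivAt

theorem hasDerivAt_R (h : Level6Setting c U P Q R f) (hτ : τ ∈ U) :
    HasDerivAt R (c * level6R (P τ) (Q τ) (R τ)) τ :=
  h.deriv_R τ hτ ▸ (h.differentiableAt_R hτ).hasDerivAt

theorem fuchsian_equation_P (h : Level6Setting c U P Q R f) {P1 P2 : ℂ → ℂ}
    (hP1 : ∀ τ ∈ U, P1 τ = deriv P τ / deriv f τ) (hP2 : ∀ τ ∈ U, P2 τ = deriv P1 τ / deriv f τ)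
    (hτ : τ ∈ U) :
    P2 τ + (-(1 / f τ) + 1 / (f τ - 1) + 1 / (f τ - 1 / 9)) * P1 τ
      - ((f τ - 1 / 3) / (3 * f τ ^ 2 * (f τ - 1) * (f τ - 1 / 9))) * P τ = 0 := by
  have hP1_eq : P1 =ᶠ[𝓝 τ] fun σ => (Q σ ^ 2 * (27 * f σ ^ 2 - 36 * f σ + 5) + 4 * R σ) /
      (6 * Q σ * ((9 * f σ - 1) * (f σ - 1))) := by
    filter_upwards [h.isOpen.mem_nhds hτ] with σ hσ
    obtain ⟨hf0, hf9, hf1⟩ := level6Cubic_ne_zero_iff.mp (h.level6Cubic_f_ne_zero hσ)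
    rw [hP1 σ hσ, h.deriv_P σ hσ, (h.hasDerivAt_f hσ).deriv, h.P_eq hσ]
    unfold level6P level6Cubic
    field_simp [h.c_ne_zero, h.Q_ne_zero σ hσ]
    ring
  obtain ⟨hf0, hf9, hf1⟩ := level6Cubic_ne_zero_iff.mp (h.level6Cubic_f_ne_zero hτ)
  have hq := h.Q_ne_zero τ hτ
  have hf := h.hasDerivAt_f hτ
  have hQ := h.hasDerivAt_Q hτ
  have hd := (((hQ.fun_pow 2).fun_mul ((((hf.fun_pow 2).const_mul 27).fun_sub
    (hf.const_mul 36)).add_const 5)).fun_add (h.hasDerivAt_R hτ |>.const_mul 4)).fun_div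
    ((hQ.const_mul 6).fun_mul (((hf.const_mul 9).sub_const 1).fun_mul (hf.sub_const 1)))
    (by simp [hq, hf9, hf1])
  rw [hP2 τ hτ, (hd.congr_of_eventuallyEq hP1_eq).deriv, hP1_eq.eq_of_nhds, hf.deriv, h.P_eq hτ]
  -- `field_simp` needs the factor `9 * f τ - 1` in its own normal form
  have h9 : f τ * 9 - 1 ≠ 0 := by rwa [mul_comm]
  unfold level6Q level6R level6Cubic
  field_simp [h.c_ne_zero]
  ring

end Level6Setting

/-- Level-6 system: `P` as a function of `f = P/Q` satisfies the Fuchsian equation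
`P'' + (-1/f + 1/(f-1) + 1/(f-1/9))P' - ((f-1/3)/(3f²(f-1)(f-1/9)))P = 0`. -/
theorem level6_P_ode (P Q R f P1 P2 : ℂ → ℂ)
    (hP : ∀ τ : ℂ, 0 < τ.im →
      deriv P τ = (2 * (Real.pi : ℂ) * I) *
        ((27 * P τ ^ 3 - 36 * P τ ^ 2 * Q τ + 5 * P τ * Q τ ^ 2 + 4 * P τ * R τ) / 48))
    (hQ : ∀ τ : ℂ, 0 < τ.im →
      deriv Q τ = (2 * (Real.pi : ℂ) * I) *
        ((-27 * P τ ^ 2 * Q τ + 24 * P τ * Q τ ^ 2 - Q τ ^ 3 + 4 * Q τ * R τ) / 48))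
    (hR : ∀ τ : ℂ, 0 < τ.im →
      deriv R τ = (2 * (Real.pi : ℂ) * I) *
        ((-729 * P τ ^ 4 + 972 * P τ ^ 3 * Q τ - 270 * P τ ^ 2 * Q τ ^ 2
            + 12 * P τ * Q τ ^ 3 - Q τ ^ 4 + 16 * R τ ^ 2) / 192))
    (hQ0 : ∀ τ : ℂ, 0 < τ.im → Q τ ≠ 0)
    (hf : ∀ τ : ℂ, 0 < τ.im → f τ = P τ / Q τ)
    (hf' : ∀ τ : ℂ, 0 < τ.im → deriv f τ ≠ 0)
    (hP1 : ∀ τ : ℂ, 0 < τ.im → P1 τ = deriv P τ / deriv f τ)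
    (hP2 : ∀ τ : ℂ, 0 < τ.im → P2 τ = deriv P1 τ / deriv f τ) :
    ∀ τ : ℂ, 0 < τ.im →
      P2 τ + (-(1 / f τ) + 1 / (f τ - 1) + 1 / (f τ - 1 / 9)) * P1 τ
        - ((f τ - 1 / 3) / (3 * f τ ^ 2 * (f τ - 1) * (f τ - 1 / 9))) * P τ = 0 := by
  have h : Level6Setting (2 * (Real.pi : ℂ) * I) {τ : ℂ | 0 < τ.im} P Q R f :=
    ⟨isOpen_lt continuous_const continuous_im, by simp [Real.pi_ne_zero, I_ne_zero],
      hP, hQ, hR, hQ0, hf, hf'⟩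
  exact fun τ hτ => h.fuchsian_equation_P hP1 hP2 hτ
end

section
/- Let {a_5(n)} be the complex sequence with a_5(0) = 1, a_5(-1) interpreted as 0, defined by the recurrence (n+1)^2 a_5(n+1) + ((11+15√5)/2 · n(n+1) + 5(1+√5)/2)·a_5(n) + (5(25+11√5)/2)·n^2·a_5(n-1) = 0 for n ≥ 0. Then the formal power series V(v) = Σ a_5(n) v^n satisfies Heun's equation V'' + (1/v + 1/(v + √5/25) + 1/(v - (11-5√5)/2))·V' + ((v - (15-7√5)/10)/(v(v + √5/25)(v - (11-5√5)/2)))·V = 0 as formal power series. -/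
/-!
The coefficient of `V'` is the derivative of the cubic `P = v (v + α) (v - β)`, so the operator is
`(d/dv) P (d/dv) + (v - q)`. In terms of the Euler operator `θ = v d/dv` it reads
`v (θ + 1)² + (α - β) θ (θ + 1) - α β (d/dv) θ - q`, whose effect on coefficients is immediate:
the `vⁿ`-coefficient of its value at `Σ a(n) vⁿ` is
`-α β (n + 1)² a(n + 1) + ((α - β) n (n + 1) - q) a(n) + n² a(n - 1)`.
For `α = √5/25`, `β = (11 - 5√5)/2`, `q = (15 - 7√5)/10` this is `-α β` times the recurrence.
-/

namespace PowerSeries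

variable {R : Type*}

noncomputable def euler [CommSemiring R] (f : R⟦X⟧) : R⟦X⟧ := X * d⁄dX R f

theorem coeff_euler [CommSemiring R] (f : R⟦X⟧) (n : ℕ) : coeff n (euler f) = n * coeff n f := by
  cases n with
  | zero => simp [euler]
  | succ n => rw [euler, coeff_succ_X_mul, coeff_derivative, mul_comm]; push_cast; ring

variable [CommRing R]

noncomputable def heunOperator (α β q : R) (V : R⟦X⟧) : R⟦X⟧ :=
  X * (X + C α) * (X - C β) * d⁄dX R (d⁄dX R V)
    + ((X + C α) * (X - C β) + X * (X - C β) + X * (X + C α)) * d⁄dX R V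
    + (X - C q) * V

theorem heunOperator_eq_euler (α β q : R) (V : R⟦X⟧) :
    heunOperator α β q V
      = X * (euler (euler V) + 2 • euler V + V) + C (α - β) * (euler (euler V) + euler V)
        - C (α * β) * d⁄dX R (euler V) - C q * V := by
  simp only [heunOperator, euler, Derivation.leibniz, derivative_X, smul_eq_mul, map_sub, map_mul]
  ring

theorem coeff_heunOperator (α β q : R) (V : R⟦X⟧) (n : ℕ) :
    coeff n (heunOperator α β q V)
      = -(α * β) * (n + 1) ^ 2 * coeff (n + 1) V + ((α - β) * n * (n + 1) - q) * coeff n V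
        + n ^ 2 * coeff (n - 1) V := by
  have shifted : coeff n (X * (euler (euler V) + 2 • euler V + V)) = n ^ 2 * coeff (n - 1) V := by
    cases n with
    | zero => simp
    | succ n =>
      simp only [coeff_succ_X_mul, map_add, map_nsmul, coeff_euler, Nat.add_sub_cancel]
      push_cast
      ring
  rw [heunOperator_eq_euler, map_sub, map_sub, map_add, shifted]
  simp only [coeff_C_mul, map_add, coeff_euler, coeff_derivative]
  push_cast
  ring

theorem heunOperator_mk_eq_zero {α β q A B K : R} {a : ℕ → R}
    (hK : -(α * β) * K = 1) (hA : -(α * β) * A = α - β) (hB : -(α * β) * B = -q)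
    (hrec : ∀ n : ℕ, ((n : R) + 1) ^ 2 * a (n + 1) + (A * n * (n + 1) + B) * a n
      + K * (n : R) ^ 2 * a (n - 1) = 0) :
    heunOperator α β q (mk a) = 0 := by
  ext n
  rw [coeff_heunOperator, coeff_mk, coeff_mk, coeff_mk, map_zero]
  linear_combination -(α * β) * hrec n - (n * (n + 1) * a n) * hA - a n * hB
    - (n ^ 2 * a (n - 1)) * hK

end PowerSeries

theorem level5_sporadic_heun_general (a : ℕ → ℝ)
    (hrec : ∀ n : ℕ,
      ((n : ℝ) + 1) ^ 2 * a (n + 1)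
        + ((11 + 15 * Real.sqrt 5) / 2 * (n : ℝ) * ((n : ℝ) + 1)
            + 5 * (1 + Real.sqrt 5) / 2) * a n
        + (5 * (25 + 11 * Real.sqrt 5) / 2) * (n : ℝ) ^ 2 * a (n - 1) = 0) :
    letI X : PowerSeries ℝ := PowerSeries.X
    letI C : ℝ → PowerSeries ℝ := (PowerSeries.C : ℝ →+* PowerSeries ℝ)
    letI V : PowerSeries ℝ := PowerSeries.mk a
    X * (X + C (Real.sqrt 5 / 25)) * (X - C ((11 - 5 * Real.sqrt 5) / 2)) *
        (PowerSeries.derivative ℝ (PowerSeries.derivative ℝ V))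
      + ((X + C (Real.sqrt 5 / 25)) * (X - C ((11 - 5 * Real.sqrt 5) / 2))
          + X * (X - C ((11 - 5 * Real.sqrt 5) / 2))
          + X * (X + C (Real.sqrt 5 / 25))) * PowerSeries.derivative ℝ V
      + (X - C ((15 - 7 * Real.sqrt 5) / 10)) * V = 0 := by
  have hs : Real.sqrt 5 ^ 2 = 5 := Real.sq_sqrt (by norm_num)
  refine PowerSeries.heunOperator_mk_eq_zero ?_ ?_ ?_ hrec
  · linear_combination ((55 * Real.sqrt 5 + 4) / 20) * hs
  · linear_combination ((15 * Real.sqrt 5 - 22) / 20) * hs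
  · linear_combination ((5 * Real.sqrt 5 - 6) / 20) * hs

/-- The generating function `V = Σ a₅(n) vⁿ` of the sequence defined by the
recurrence `(n+1)² a₅(n+1) + ((11+15√5)/2·n(n+1) + 5(1+√5)/2) a₅(n)
+ 5(25+11√5)/2·n² a₅(n-1) = 0`, `a₅(0) = 1`, satisfies Heun's equation (with
denominators cleared) as a formal power series. -/
theorem level5_sporadic_heun (a : ℕ → ℝ) (ha0 : a 0 = 1)
    (hrec : ∀ n : ℕ,
      ((n : ℝ) + 1) ^ 2 * a (n + 1)
        + ((11 + 15 * Real.sqrt 5) / 2 * (n : ℝ) * ((n : ℝ) + 1)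
            + 5 * (1 + Real.sqrt 5) / 2) * a n
        + (5 * (25 + 11 * Real.sqrt 5) / 2) * (n : ℝ) ^ 2 * a (n - 1) = 0) :
    letI X : PowerSeries ℝ := PowerSeries.X
    letI C : ℝ → PowerSeries ℝ := (PowerSeries.C : ℝ →+* PowerSeries ℝ)
    letI V : PowerSeries ℝ := PowerSeries.mk a
    X * (X + C (Real.sqrt 5 / 25)) * (X - C ((11 - 5 * Real.sqrt 5) / 2)) *
        (PowerSeries.derivative ℝ (PowerSeries.derivative ℝ V))
      + ((X + C (Real.sqrt 5 / 25)) * (X - C ((11 - 5 * Real.sqrt 5) / 2))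
          + X * (X - C ((11 - 5 * Real.sqrt 5) / 2))
          + X * (X + C (Real.sqrt 5 / 25))) * PowerSeries.derivative ℝ V
      + (X - C ((15 - 7 * Real.sqrt 5) / 10)) * V = 0 :=
  level5_sporadic_heun_general a hrec
end

section
/- Suppose R, U, S : ℍ → ℂ satisfy DR = (27R^3 + 36R^2U + 5RU^2 + RS)/12, DU = (-27R^2U - 24RU^2 - U^3 + SU)/12, DS = (-729R^4 - 972R^3U - 270R^2U^2 - 12RU^3 - U^4 + S^2)/12 with D = (1/(2πi))d/dτ. Let u = R/U and regard U as a function of u. Then U''(u) + (1/u + 1/(u+1) + 1/(u+1/9))·U'(u) + ((u+1/3)/(u(u+1)(u+1/9)))·U(u) = 0. -/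
/-!
Write `D = (2πi)⁻¹ d/dτ`, `R = uU` and `P(u) = u(9u+1)(u+1)`. The system gives
`Du = P(u) U²/2` and `DU = U (S - (27u²+24u+1) U²)/12`, so
`dU/du = (S - (27u²+24u+1) U²)/(6 P(u) U)`; differentiating once more and using the equation
for `DS`, the parameter `S` cancels and Heun's equation remains.

The hypotheses only constrain `deriv`, which is `0` at points of non-differentiability, so
differentiability has to be recovered. Where `P(u) ≠ 0`, `U` is differentiable: otherwise
`DU = 0`, and either `U = R/u` is differentiable after all or also `DR = 0`, which together force
`P(u) = 0`. Points with `P(u) = 0` do not occur: there `P(u)` has a simple zero because `u' ≠ 0`, so `P(u) u'` has a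
simple zero, yet it is a constant multiple of `(P(u) U)²`, and `P(u) U` extends holomorphically
across the point by the removable singularity theorem.
-/

open Complex Filter Topology Set

theorem differentiableOn_of_deriv_ne_zero {𝕜 F : Type*} [NontriviallyNormedField 𝕜]
    [NormedAddCommGroup F] [NormedSpace 𝕜 F] {f : 𝕜 → F} {s : Set 𝕜}
    (h : ∀ x ∈ s, deriv f x ≠ 0) : DifferentiableOn 𝕜 f s := fun x hx =>
  (differentiableAt_of_deriv_ne_zero (h x hx)).differentiableWithinAt

theorem deriv_eq_zero_of_eventually_sq_eq {F W : ℂ → ℂ} {τ : ℂ} (hF : ContinuousAt F τ)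
    (hF0 : F τ = 0) (hW : ∀ᶠ z in 𝓝[≠] τ, DifferentiableAt ℂ W z ∧ W z ^ 2 = F z) :
    deriv F τ = 0 := by
  set W₀ := Function.update W τ 0
  have hW₀ : ∀ᶠ z in 𝓝[≠] τ, DifferentiableAt ℂ W₀ z ∧ W₀ z ^ 2 = F z := by
    filter_upwards [hW, self_mem_nhdsWithin] with z ⟨hWz, hsq⟩ (hz : z ≠ τ)
    have hEq : W₀ =ᶠ[𝓝 z] W := by
      filter_upwards [isOpen_ne.mem_nhds hz] with w hw using Function.update_of_ne hw _ _
    exact ⟨hWz.congr_of_eventuallyEq hEq, by rw [hEq.eq_of_nhds, hsq]⟩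
  have hcont : ContinuousAt W₀ τ := by
    rw [continuousAt_update_same, tendsto_zero_iff_norm_tendsto_zero]
    have hsqrt : Tendsto (fun z => √‖F z‖) (𝓝[≠] τ) (𝓝 0) := by
      simpa [hF0] using hF.norm.sqrt.tendsto.mono_left nhdsWithin_le_nhds
    refine hsqrt.congr' ?_
    filter_upwards [hW] with z hz
    rw [← hz.2, norm_pow, Real.sqrt_sq (norm_nonneg _)]
  have hanalytic : AnalyticAt ℂ W₀ τ :=
    analyticAt_of_differentiable_on_punctured_nhds_of_continuousAt (hW₀.mono fun _ h => h.1) hcont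
  have hFW : F =ᶠ[𝓝 τ] fun z => W₀ z ^ 2 := by
    filter_upwards [eventually_nhdsWithin_iff.mp (hW₀.mono fun _ h => h.2)] with z hz
    rcases eq_or_ne z τ with rfl | hne
    · simp [W₀, hF0]
    · exact (hz hne).symm
  rw [hFW.deriv_eq, (hanalytic.differentiableAt.hasDerivAt.fun_pow 2).deriv]
  simp [W₀]

noncomputable section

namespace Level6

def dR (R U S : ℂ) : ℂ := (27 * R ^ 3 + 36 * R ^ 2 * U + 5 * R * U ^ 2 + R * S) / 12

def dU (R U S : ℂ) : ℂ := (-27 * R ^ 2 * U - 24 * R * U ^ 2 - U ^ 3 + S * U) / 12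

def dS (R U S : ℂ) : ℂ :=
  (-729 * R ^ 4 - 972 * R ^ 3 * U - 270 * R ^ 2 * U ^ 2 - 12 * R * U ^ 3 - U ^ 4 + S ^ 2) / 12

/-- The system `DR = dR, DU = dU, DS = dS` on `Ω` with `D = c⁻¹ d/dτ`; the paper's `D` is the
case `c = 2πi`, `Ω = ℍ`. -/
structure IsSolution (c : ℂ) (Ω : Set ℂ) (R U S : ℂ → ℂ) : Prop where
  deriv_R : ∀ z ∈ Ω, deriv R z = c * dR (R z) (U z) (S z)
  deriv_U : ∀ z ∈ Ω, deriv U z = c * dU (R z) (U z) (S z)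
  deriv_S : ∀ z ∈ Ω, deriv S z = c * dS (R z) (U z) (S z)

def singularPoly (x : ℂ) : ℂ := x * (9 * x + 1) * (x + 1)

/-- `U · DR - R · DU = U² · D(R/U)`. -/
theorem wronskian_eq (u U S : ℂ) :
    U * dR (u * U) U S - u * U * dU (u * U) U S = singularPoly u * U ^ 4 / 2 := by
  simp only [dR, dU, singularPoly]
  ring

theorem dU_mul (u U S : ℂ) :
    dU (u * U) U S = U * (S - (27 * u ^ 2 + 24 * u + 1) * U ^ 2) / 12 := by
  simp only [dU]
  ring

theorem hasDerivAt_singularPoly_comp {u : ℂ → ℂ} {u' z : ℂ} (hu : HasDerivAt u u' z) :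
    HasDerivAt (fun w => singularPoly (u w)) ((27 * u z ^ 2 + 20 * u z + 1) * u') z :=
  ((hu.fun_mul ((hu.const_mul 9).add_const 1)).fun_mul (hu.add_const 1)).congr_deriv (by ring)

theorem singularPoly_root_simple {x : ℂ} (hx : singularPoly x = 0) :
    27 * x ^ 2 + 20 * x + 1 ≠ 0 := by
  simp only [singularPoly, mul_eq_zero] at hx
  rcases hx with (rfl | h) | h
  · norm_num
  · rw [show x = -1 / 9 by linear_combination h / 9]
    norm_num
  · rw [show x = -1 by linear_combination h]
    norm_num

variable {c : ℂ} {Ω : Set ℂ} {R U S u : ℂ → ℂ}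

theorem differentiableAt_U_of_singularPoly_ne_zero (hsys : IsSolution c Ω R U S) (hc : c ≠ 0)
    (hΩ : IsOpen Ω) (hU0 : ∀ z ∈ Ω, U z ≠ 0) (hRu : ∀ z ∈ Ω, R z = u z * U z) {z : ℂ}
    (hz : z ∈ Ω) (hud : DifferentiableAt ℂ u z) (hP : singularPoly (u z) ≠ 0) :
    DifferentiableAt ℂ U z := by
  by_contra hUd
  have hRd : ¬DifferentiableAt ℂ R z := by
    intro hRd
    have hu0 : u z ≠ 0 := fun h => hP (by simp [singularPoly, h])
    refine hUd ((hRd.div hud hu0).congr_of_eventuallyEq ?_)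
    filter_upwards [hΩ.mem_nhds hz, hud.continuousAt.eventually_ne hu0] with w hw hw0
    rw [Pi.div_apply, hRu w hw, mul_div_cancel_left₀ _ hw0]
  have hdR := hsys.deriv_R z hz
  have hdU := hsys.deriv_U z hz
  rw [deriv_zero_of_not_differentiableAt hRd, eq_comm, mul_eq_zero, or_iff_right hc] at hdR
  rw [deriv_zero_of_not_differentiableAt hUd, eq_comm, mul_eq_zero, or_iff_right hc] at hdU
  have h := wronskian_eq (u z) (U z) (S z)
  rw [← hRu z hz, hdR, hdU] at h
  exact mul_ne_zero hP (pow_ne_zero 4 (hU0 z hz)) (by linear_combination -2 * h)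

theorem deriv_u_eq_singularPoly (hsys : IsSolution c Ω R U S) (hΩ : IsOpen Ω)
    (hU0 : ∀ z ∈ Ω, U z ≠ 0) (hRu : ∀ z ∈ Ω, R z = u z * U z) {z : ℂ} (hz : z ∈ Ω)
    (hud : DifferentiableAt ℂ u z) (hUd : DifferentiableAt ℂ U z) :
    deriv u z = c * singularPoly (u z) * U z ^ 2 / 2 := by
  have hRd : DifferentiableAt ℂ R z :=
    (hud.mul hUd).congr_of_eventuallyEq (eventually_of_mem (hΩ.mem_nhds hz) hRu)
  have hu : u =ᶠ[𝓝 z] fun w => R w / U w := by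
    filter_upwards [hΩ.mem_nhds hz] with w hw
    rw [hRu w hw, mul_div_cancel_right₀ _ (hU0 w hw)]
  have hU0z := hU0 z hz
  rw [hu.deriv_eq, deriv_fun_div hRd hUd hU0z, hsys.deriv_R z hz, hsys.deriv_U z hz, hRu z hz,
    div_eq_iff (pow_ne_zero 2 hU0z)]
  linear_combination c * wronskian_eq (u z) (U z) (S z)

theorem singularPoly_u_ne_zero (hsys : IsSolution c Ω R U S) (hc : c ≠ 0) (hΩ : IsOpen Ω)
    (hU0 : ∀ z ∈ Ω, U z ≠ 0) (hRu : ∀ z ∈ Ω, R z = u z * U z) (hu' : ∀ z ∈ Ω, deriv u z ≠ 0)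
    {z : ℂ} (hz : z ∈ Ω) : singularPoly (u z) ≠ 0 := by
  intro hP
  have hud : DifferentiableOn ℂ u Ω := differentiableOn_of_deriv_ne_zero hu'
  have hu'd : DifferentiableAt ℂ (deriv u) z := (hud.deriv hΩ).differentiableAt (hΩ.mem_nhds hz)
  have hPu := hasDerivAt_singularPoly_comp (hud.differentiableAt (hΩ.mem_nhds hz)).hasDerivAt
  have hPu' : (27 * u z ^ 2 + 20 * u z + 1) * deriv u z ≠ 0 :=
    mul_ne_zero (singularPoly_root_simple hP) (hu' z hz)
  -- `F` has a simple zero at `z`, yet near `z` it is the square of `P(u) U`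
  set F : ℂ → ℂ := fun w => 2 / c * singularPoly (u w) * deriv u w
  have hF : HasDerivAt F (2 / c * ((27 * u z ^ 2 + 20 * u z + 1) * deriv u z) * deriv u z) z := by
    simpa [F, hP] using (hPu.const_mul (2 / c)).fun_mul hu'd.hasDerivAt
  have hF' : deriv F z ≠ 0 := by
    rw [hF.deriv]
    exact mul_ne_zero (mul_ne_zero (div_ne_zero two_ne_zero hc) hPu') (hu' z hz)
  refine hF' (deriv_eq_zero_of_eventually_sq_eq hF.continuousAt (by simp [F, hP])
    (W := fun w => singularPoly (u w) * U w) ?_)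
  filter_upwards [hPu.eventually_ne hPu', mem_nhdsWithin_of_mem_nhds (hΩ.mem_nhds hz)]
    with w hPw hw
  have hudw := hud.differentiableAt (hΩ.mem_nhds hw)
  have hUdw := differentiableAt_U_of_singularPoly_ne_zero hsys hc hΩ hU0 hRu hw hudw hPw
  refine ⟨(hasDerivAt_singularPoly_comp hudw.hasDerivAt).differentiableAt.mul hUdw, ?_⟩
  simp only [F, deriv_u_eq_singularPoly hsys hΩ hU0 hRu hw hudw hUdw]
  field_simp

theorem differentiableOn_U (hsys : IsSolution c Ω R U S) (hc : c ≠ 0) (hΩ : IsOpen Ω)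
    (hU0 : ∀ z ∈ Ω, U z ≠ 0) (hRu : ∀ z ∈ Ω, R z = u z * U z) (hu' : ∀ z ∈ Ω, deriv u z ≠ 0) :
    DifferentiableOn ℂ U Ω := fun _ hz =>
  (differentiableAt_U_of_singularPoly_ne_zero hsys hc hΩ hU0 hRu hz
    ((differentiableOn_of_deriv_ne_zero hu').differentiableAt (hΩ.mem_nhds hz))
    (singularPoly_u_ne_zero hsys hc hΩ hU0 hRu hu' hz)).differentiableWithinAt

theorem differentiableAt_S (hsys : IsSolution c Ω R U S) (hc : c ≠ 0) (hΩ : IsOpen Ω)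
    (hU0 : ∀ z ∈ Ω, U z ≠ 0) (hRu : ∀ z ∈ Ω, R z = u z * U z) (hud : DifferentiableOn ℂ u Ω)
    (hUd : DifferentiableOn ℂ U Ω) {z : ℂ} (hz : z ∈ Ω) : DifferentiableAt ℂ S z := by
  have hS : S =ᶠ[𝓝 z] fun w =>
      (27 * u w ^ 2 + 24 * u w + 1) * U w ^ 2 + 12 / c * deriv U w / U w := by
    filter_upwards [hΩ.mem_nhds hz] with w hw
    rw [hsys.deriv_U w hw, hRu w hw, dU_mul]
    field_simp [hU0 w hw]
    ring
  have hudz := hud.differentiableAt (hΩ.mem_nhds hz)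
  have hUdz := hUd.differentiableAt (hΩ.mem_nhds hz)
  have hU'dz := (hUd.deriv hΩ).differentiableAt (hΩ.mem_nhds hz)
  have hU0z := hU0 z hz
  refine DifferentiableAt.congr_of_eventuallyEq ?_ hS
  fun_prop (disch := assumption)

theorem deriv_U_div_deriv_u (hsys : IsSolution c Ω R U S) (hc : c ≠ 0) (hΩ : IsOpen Ω)
    (hU0 : ∀ z ∈ Ω, U z ≠ 0) (hRu : ∀ z ∈ Ω, R z = u z * U z) (hu' : ∀ z ∈ Ω, deriv u z ≠ 0)
    {z : ℂ} (hz : z ∈ Ω) :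
    deriv U z / deriv u z =
      (S z - (27 * u z ^ 2 + 24 * u z + 1) * U z ^ 2) / (6 * singularPoly (u z) * U z) := by
  have hP := singularPoly_u_ne_zero hsys hc hΩ hU0 hRu hu' hz
  have hU0z := hU0 z hz
  rw [hsys.deriv_U z hz, deriv_u_eq_singularPoly hsys hΩ hU0 hRu hz
    ((differentiableOn_of_deriv_ne_zero hu').differentiableAt (hΩ.mem_nhds hz))
    ((differentiableOn_U hsys hc hΩ hU0 hRu hu').differentiableAt (hΩ.mem_nhds hz)), hRu z hz,
    dU_mul]
  field_simp
  ring

theorem heun_equation (hsys : IsSolution c Ω R U S) (hc : c ≠ 0) (hΩ : IsOpen Ω)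
    (hU0 : ∀ z ∈ Ω, U z ≠ 0) (hRu : ∀ z ∈ Ω, R z = u z * U z) (hu' : ∀ z ∈ Ω, deriv u z ≠ 0)
    {U1 U2 : ℂ → ℂ} (hU1 : ∀ z ∈ Ω, U1 z = deriv U z / deriv u z)
    (hU2 : ∀ z ∈ Ω, U2 z = deriv U1 z / deriv u z) {z : ℂ} (hz : z ∈ Ω) :
    U2 z + (1 / u z + 1 / (u z + 1) + 1 / (u z + 1 / 9)) * U1 z
      + ((u z + 1 / 3) / (u z * (u z + 1) * (u z + 1 / 9))) * U z = 0 := by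
  have hud := differentiableOn_of_deriv_ne_zero hu'
  have hUd := differentiableOn_U hsys hc hΩ hU0 hRu hu'
  have hP := singularPoly_u_ne_zero hsys hc hΩ hU0 hRu hu' hz
  have hU0z := hU0 z hz
  have hU1eq : U1 =ᶠ[𝓝 z] fun w =>
      (S w - (27 * u w ^ 2 + 24 * u w + 1) * U w ^ 2) / (6 * singularPoly (u w) * U w) := by
    filter_upwards [hΩ.mem_nhds hz] with w hw
    rw [hU1 w hw, deriv_U_div_deriv_u hsys hc hΩ hU0 hRu hu' hw]
  have eu := (hud.differentiableAt (hΩ.mem_nhds hz)).hasDerivAt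
  have eU := (hUd.differentiableAt (hΩ.mem_nhds hz)).hasDerivAt
  have eS := (differentiableAt_S hsys hc hΩ hU0 hRu hud hUd hz).hasDerivAt
  have eNum := eS.fun_sub
    (((((eu.fun_pow 2).const_mul 27).fun_add (eu.const_mul 24)).add_const 1).fun_mul
      (eU.fun_pow 2))
  have eDen := ((hasDerivAt_singularPoly_comp eu).const_mul 6).fun_mul eU
  have eU1 := (eNum.fun_div eDen (mul_ne_zero (mul_ne_zero (by norm_num) hP) hU0z)).congr_of_eventuallyEq
    hU1eq
  obtain ⟨⟨hu0, hu9⟩, hu1⟩ : (u z ≠ 0 ∧ 9 * u z + 1 ≠ 0) ∧ u z + 1 ≠ 0 := by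
    simpa only [singularPoly, mul_ne_zero_iff] using hP
  have hu9' : u z * 9 + 1 ≠ 0 := by rwa [mul_comm]
  rw [hU2 z hz, eU1.deriv, hU1 z hz, deriv_U_div_deriv_u hsys hc hΩ hU0 hRu hu' hz,
    deriv_u_eq_singularPoly hsys hΩ hU0 hRu hz eu.differentiableAt eU.differentiableAt,
    hsys.deriv_U z hz, hsys.deriv_S z hz, hRu z hz]
  simp only [singularPoly, dU, dS, Nat.cast_ofNat, Nat.add_one_sub_one, pow_one]
  field_simp
  ring

end Level6

end

/-- Level-6 system (fourth form): `U` as a function of `u = R/U` satisfies Heun's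
equation with singularities at `0`, `-1`, `-1/9`. -/
theorem level6_U_heun (R U S u U1 U2 : ℂ → ℂ)
    (hR : ∀ τ : ℂ, 0 < τ.im →
      deriv R τ = (2 * (Real.pi : ℂ) * I) *
        ((27 * R τ ^ 3 + 36 * R τ ^ 2 * U τ + 5 * R τ * U τ ^ 2 + R τ * S τ) / 12))
    (hU : ∀ τ : ℂ, 0 < τ.im →
      deriv U τ = (2 * (Real.pi : ℂ) * I) *
        ((-27 * R τ ^ 2 * U τ - 24 * R τ * U τ ^ 2 - U τ ^ 3 + S τ * U τ) / 12))
    (hS : ∀ τ : ℂ, 0 < τ.im →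
      deriv S τ = (2 * (Real.pi : ℂ) * I) *
        ((-729 * R τ ^ 4 - 972 * R τ ^ 3 * U τ - 270 * R τ ^ 2 * U τ ^ 2
            - 12 * R τ * U τ ^ 3 - U τ ^ 4 + S τ ^ 2) / 12))
    (hU0 : ∀ τ : ℂ, 0 < τ.im → U τ ≠ 0)
    (hu : ∀ τ : ℂ, 0 < τ.im → u τ = R τ / U τ)
    (hu' : ∀ τ : ℂ, 0 < τ.im → deriv u τ ≠ 0)
    (hU1 : ∀ τ : ℂ, 0 < τ.im → U1 τ = deriv U τ / deriv u τ)
    (hU2 : ∀ τ : ℂ, 0 < τ.im → U2 τ = deriv U1 τ / deriv u τ) :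
    ∀ τ : ℂ, 0 < τ.im →
      U2 τ + (1 / u τ + 1 / (u τ + 1) + 1 / (u τ + 1 / 9)) * U1 τ
        + ((u τ + 1 / 3) / (u τ * (u τ + 1) * (u τ + 1 / 9))) * U τ = 0 := by
  have hc : 2 * (Real.pi : ℂ) * I ≠ 0 := by simp [Real.pi_ne_zero]
  have hΩ : IsOpen {τ : ℂ | 0 < τ.im} := isOpen_lt continuous_const continuous_im
  have hRu (τ : ℂ) (hτ : 0 < τ.im) : R τ = u τ * U τ := by
    rw [hu τ hτ, div_mul_cancel₀ _ (hU0 τ hτ)]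
  exact fun τ hτ => Level6.heun_equation ⟨hR, hU, hS⟩ hc hΩ hU0 hRu hu' hU1 hU2 hτ
end
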